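/- Relaxation of the betting inverses by the kl inverses. For every integer T ≥ 1, every z ∈ [0,1]^T and every C ≥ 0, one has Ψ_+^{-1}(z, C/T) ≤ kl_+^{-1}(μ_z, C/T) and Ψ_-^{-1}(z, C/T) ≥ kl_-^{-1}(μ_z, C/T). -/

import Mathlib

open MeasureTheory Set

/-- Extended-real logarithm: `log ⊤ = ⊤`, `log x = -∞` for `x ≤ 0` (in particular `log 0 = -∞`). -/
noncomputable def elog (x : EReal) : EReal :=
  if x = ⊤ then ⊤ else if x ≤ 0 then ⊥ else ((Real.log x.toReal : ℝ) : EReal)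

/-- Lower endpoint `-1/(1-μ)` of the betting interval, with the convention `1/0 = +∞`. -/
noncomputable def betLower (μ : ℝ) : EReal := if μ = 1 then ⊥ else ((-(1 - μ)⁻¹ : ℝ) : EReal)

/-- Upper endpoint `1/μ` of the betting interval, with the convention `1/0 = +∞`. -/
noncomputable def betUpper (μ : ℝ) : EReal := if μ = 0 then ⊤ else ((μ⁻¹ : ℝ) : EReal)

/-- The betting interval `A_μ = [-1/(1-μ), 1/μ]` (as a set of extended reals). -/
noncomputable def betSet (μ : ℝ) : Set EReal := Set.Icc (betLower μ) (betUpper μ)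

/-- `(1/T) ∑_t log(1 + α (z_t - μ))`, with EReal conventions (`0 * ±∞ = 0`, `log 0 = -∞`). -/
noncomputable def betTerm {T : ℕ} (z : Fin T → ℝ) (μ : ℝ) (α : EReal) : EReal :=
  (((T : ℝ)⁻¹ : ℝ) : EReal) * ∑ t : Fin T, elog (1 + α * ((z t - μ : ℝ) : EReal))

/-- `Ψ(z, μ) = sup_{α ∈ A_μ} (1/T) ∑_t log(1 + α (z_t - μ))`. -/
noncomputable def Psi {T : ℕ} (z : Fin T → ℝ) (μ : ℝ) : EReal :=
  ⨆ α ∈ betSet μ, betTerm z μ α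

/-- `μ_z = (1/T) ∑_t z_t`. -/
noncomputable def muz {T : ℕ} (z : Fin T → ℝ) : ℝ := (T : ℝ)⁻¹ * ∑ t, z t

/-- The upper inverse `Ψ_+^{-1}(z, C) = sup {μ ∈ [0,1] : Ψ(z,μ) ≤ C}`. -/
noncomputable def PsiInvPlus {T : ℕ} (z : Fin T → ℝ) (C : EReal) : ℝ :=
  sSup {μ : ℝ | μ ∈ Set.Icc (0 : ℝ) 1 ∧ Psi z μ ≤ C}

/-- The lower inverse `Ψ_-^{-1}(z, C) = inf {μ ∈ [0,1] : Ψ(z,μ) ≤ C}`. -/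
noncomputable def PsiInvMinus {T : ℕ} (z : Fin T → ℝ) (C : EReal) : ℝ :=
  sInf {μ : ℝ | μ ∈ Set.Icc (0 : ℝ) 1 ∧ Psi z μ ≤ C}

/-- The binary relative entropy `kl(p, q)`, valued in the extended reals, with
`kl(0,q) = log(1/(1-q))`, `kl(1,q) = log(1/q)`, `kl(p,0) = +∞` for `p > 0` and
`kl(p,1) = +∞` for `p < 1`. -/
noncomputable def bkl (p q : ℝ) : EReal :=
  if p = 0 then (if q = 1 then ⊤ else ((Real.log (1 / (1 - q)) : ℝ) : EReal))
  else if p = 1 then (if q = 0 then ⊤ else ((Real.log (1 / q) : ℝ) : EReal))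
  else if q = 0 ∨ q = 1 then ⊤
  else ((p * Real.log (p / q) + (1 - p) * Real.log ((1 - p) / (1 - q)) : ℝ) : EReal)

/-- The upper inverse `kl_+^{-1}(p, C) = sup {q ∈ [0,1] : kl(p,q) ≤ C}`. -/
noncomputable def klInvPlus (p : ℝ) (C : EReal) : ℝ :=
  sSup {q : ℝ | q ∈ Set.Icc (0 : ℝ) 1 ∧ bkl p q ≤ C}

/-- The lower inverse `kl_-^{-1}(p, C) = inf {q ∈ [0,1] : kl(p,q) ≤ C}`. -/
noncomputable def klInvMinus (p : ℝ) (C : EReal) : ℝ :=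
  sInf {q : ℝ | q ∈ Set.Icc (0 : ℝ) 1 ∧ bkl p q ≤ C}

/-! For `μ ∈ (0,1)` the bet `α⋆ = (μ_z - μ) / (μ (1 - μ))` lies in `A_μ`, and
`1 + α⋆ (z_t - μ) = z_t (μ_z / μ) + (1 - z_t) ((1 - μ_z) / (1 - μ))` is a convex combination, so
concavity of `log` and averaging over `t` give `kl(μ_z, μ) ≤ Ψ(z, μ)`. At `μ ∈ {0, 1}` the infinite
bets `±∞` make `Ψ = +∞` wherever `kl = +∞`. Hence `{Ψ(z, ·) ≤ C/T} ⊆ {kl(μ_z, ·) ≤ C/T}`, and the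
first set contains `μ_z` because `Ψ(z, μ_z) ≤ 0` by `log x ≤ x - 1`; so its sup and inf are
bounded by those of the second. -/

@[norm_cast]
lemma EReal.coe_finset_sum {ι : Type*} (s : Finset ι) (f : ι → ℝ) :
    ((∑ i ∈ s, f i : ℝ) : EReal) = ∑ i ∈ s, (f i : EReal) :=
  map_sum (⟨⟨Real.toEReal, EReal.coe_zero⟩, EReal.coe_add⟩ : ℝ →+ EReal) f s

lemma mul_log_add_mul_log_le_log {w A B : ℝ} (hw : w ∈ Icc (0 : ℝ) 1) (hA : 0 < A) (hB : 0 < B) :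
    w * Real.log A + (1 - w) * Real.log B ≤ Real.log (w * A + (1 - w) * B) := by
  simpa using strictConcaveOn_log_Ioi.concaveOn.2 (mem_Ioi.2 hA) (mem_Ioi.2 hB) hw.1
    (sub_nonneg.2 hw.2) (add_sub_cancel _ _)

section elog

lemma elog_coe_of_pos {r : ℝ} (hr : 0 < r) : elog r = (Real.log r : EReal) := by
  rw [elog, if_neg (EReal.coe_ne_top r), if_neg (by exact_mod_cast hr.not_ge), EReal.toReal_coe]

@[simp]
lemma elog_one : elog 1 = 0 := by
  simpa using elog_coe_of_pos one_pos

@[simp]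
lemma elog_one_add_top : elog (1 + ⊤) = ⊤ := by
  rw [EReal.add_top_of_ne_bot (by decide)]
  simp [elog]

lemma elog_coe_le_sub_one (r : ℝ) : elog r ≤ ((r - 1 : ℝ) : EReal) := by
  rcases le_or_gt r 0 with hr | hr
  · rw [elog, if_neg (EReal.coe_ne_top r), if_pos (by exact_mod_cast hr)]
    exact bot_le
  · rw [elog_coe_of_pos hr, EReal.coe_le_coe_iff]
    exact Real.log_le_sub_one_of_pos hr

end elog

section muz

variable {T : ℕ} (z : Fin T → ℝ)

lemma sum_eq_mul_muz : ∑ t, z t = T * muz z := by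
  rcases eq_or_ne (T : ℝ) 0 with hT | hT
  · obtain rfl : T = 0 := by exact_mod_cast hT
    simp
  · rw [muz, mul_inv_cancel_left₀ hT]

lemma muz_mem_Icc (hz : ∀ t, z t ∈ Icc (0 : ℝ) 1) : muz z ∈ Icc (0 : ℝ) 1 := by
  refine ⟨mul_nonneg (by positivity) (Finset.sum_nonneg fun t _ ↦ (hz t).1), ?_⟩
  calc muz z ≤ (T : ℝ)⁻¹ * ∑ _t : Fin T, (1 : ℝ) :=
        mul_le_mul_of_nonneg_left (Finset.sum_le_sum fun t _ ↦ (hz t).2) (by positivity)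
    _ ≤ 1 := by simpa using inv_mul_le_one_of_le₀ le_rfl (Nat.cast_nonneg T)

variable {z}

lemma eq_zero_of_muz_eq_zero (hz : ∀ t, 0 ≤ z t) (h : muz z = 0) (t : Fin T) : z t = 0 :=
  (Finset.sum_eq_zero_iff_of_nonneg fun t _ ↦ hz t).1 (by rw [sum_eq_mul_muz, h, mul_zero]) t
    (Finset.mem_univ t)

lemma eq_one_of_muz_eq_one (hz : ∀ t, z t ≤ 1) (h : muz z = 1) (t : Fin T) : z t = 1 := by
  have hsum : ∑ t, (1 - z t) = 0 := by simp [Finset.sum_sub_distrib, sum_eq_mul_muz z, h]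
  have := (Finset.sum_eq_zero_iff_of_nonneg fun t _ ↦ sub_nonneg.2 (hz t)).1 hsum t
    (Finset.mem_univ t)
  linarith

end muz

section Psi

variable {T : ℕ} {z : Fin T → ℝ} {μ : ℝ}

lemma betTerm_le_Psi {α : EReal} (hα : α ∈ betSet μ) : betTerm z μ α ≤ Psi z μ :=
  le_iSup₂ (f := fun α (_ : α ∈ betSet μ) ↦ betTerm z μ α) α hα

lemma zero_mem_betSet (hμ : μ ∈ Icc (0 : ℝ) 1) : (0 : EReal) ∈ betSet μ := by
  constructor
  · unfold betLower
    split_ifs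
    · exact bot_le
    · exact EReal.coe_nonpos.2 (neg_nonpos.2 (inv_nonneg.2 (sub_nonneg.2 hμ.2)))
  · unfold betUpper
    split_ifs
    · exact le_top
    · exact EReal.coe_nonneg.2 (inv_nonneg.2 hμ.1)

lemma Psi_nonneg (hμ : μ ∈ Icc (0 : ℝ) 1) : 0 ≤ Psi z μ := by
  simpa [betTerm] using betTerm_le_Psi (z := z) (zero_mem_betSet hμ)

lemma betTerm_coe_le (a : ℝ) :
    betTerm z μ a ≤ (((T : ℝ)⁻¹ * ∑ t, a * (z t - μ) : ℝ) : EReal) := by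
  rw [betTerm, EReal.coe_mul, EReal.coe_finset_sum]
  gcongr with t
  calc elog (1 + a * (z t - μ : ℝ)) = elog ((1 + a * (z t - μ) : ℝ)) := by norm_cast
    _ ≤ _ := by simpa using elog_coe_le_sub_one (1 + a * (z t - μ))

lemma betTerm_coe_eq {a : ℝ} (h : ∀ t, 0 < 1 + a * (z t - μ)) :
    betTerm z μ a = (((T : ℝ)⁻¹ * ∑ t, Real.log (1 + a * (z t - μ)) : ℝ) : EReal) := by
  rw [betTerm, EReal.coe_mul, EReal.coe_finset_sum]
  congr 1
  refine Finset.sum_congr rfl fun t _ ↦ ?_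
  rw [← elog_coe_of_pos (h t)]
  norm_cast

lemma betTerm_eq_top {α : EReal} (hα : ∀ t, z t ≠ μ → α * (z t - μ : ℝ) = ⊤)
    (h : ∃ t, z t ≠ μ) : betTerm z μ α = ⊤ := by
  obtain ⟨t₀, ht₀⟩ := h
  have hterm (t : Fin T) (ht : z t ≠ μ) : elog (1 + α * (z t - μ : ℝ)) = ⊤ := by
    rw [hα t ht, elog_one_add_top]
  have hsum : ∑ t, elog (1 + α * (z t - μ : ℝ)) = ⊤ := by
    refine top_le_iff.1 ?_
    calc ⊤ = elog (1 + α * (z t₀ - μ : ℝ)) := (hterm t₀ ht₀).symm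
      _ ≤ ∑ t, elog (1 + α * (z t - μ : ℝ)) :=
        Finset.single_le_sum (f := fun t ↦ elog (1 + α * (z t - μ : ℝ))) (fun t _ ↦ ?_)
          (Finset.mem_univ t₀)
    by_cases ht : z t = μ
    · simp [ht]
    · exact (hterm t ht).symm ▸ le_top
  have hT : (0 : ℝ) < T := Nat.cast_pos.2 (Fin.pos t₀)
  rw [betTerm, hsum, EReal.coe_mul_top_of_pos (inv_pos.2 hT)]

lemma betTerm_eq_zero (h : ∀ t, z t = μ) (α : EReal) : betTerm z μ α = 0 := by
  simp [betTerm, h]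

lemma Psi_muz_nonpos (hz : ∀ t, z t ∈ Icc (0 : ℝ) 1) : Psi z (muz z) ≤ 0 := by
  refine iSup₂_le fun α hα ↦ ?_
  induction α using EReal.rec with
  | bot =>
    have hp : muz z = 1 := by
      by_contra hp
      simpa [betLower, hp] using hα.1
    rw [betTerm_eq_zero fun t ↦ hp ▸ eq_one_of_muz_eq_one (fun t ↦ (hz t).2) hp t]
  | top =>
    have hp : muz z = 0 := by
      by_contra hp
      simpa [betUpper, hp] using hα.2
    rw [betTerm_eq_zero fun t ↦ hp ▸ eq_zero_of_muz_eq_zero (fun t ↦ (hz t).1) hp t]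
  | coe a =>
    refine (betTerm_coe_le a).trans (le_of_eq ?_)
    simp [← Finset.mul_sum, Finset.sum_sub_distrib, sum_eq_mul_muz z]

lemma Psi_zero_eq_top (hz : ∀ t, 0 ≤ z t) (h : ∃ t, z t ≠ 0) : Psi z 0 = ⊤ := by
  have hα (t : Fin T) (ht : z t ≠ 0) : ⊤ * ((z t - 0 : ℝ) : EReal) = ⊤ := by
    rw [sub_zero, EReal.top_mul_coe_of_pos ((hz t).lt_of_ne' ht)]
  refine top_le_iff.1 ((betTerm_eq_top hα h).symm.trans_le (betTerm_le_Psi ⟨le_top, ?_⟩))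
  simp [betUpper]

lemma Psi_one_eq_top (hz : ∀ t, z t ≤ 1) (h : ∃ t, z t ≠ 1) : Psi z 1 = ⊤ := by
  have hα (t : Fin T) (ht : z t ≠ 1) : ⊥ * ((z t - 1 : ℝ) : EReal) = ⊤ :=
    EReal.bot_mul_coe_of_neg (sub_neg.2 ((hz t).lt_of_ne ht))
  refine top_le_iff.1 ((betTerm_eq_top hα h).symm.trans_le (betTerm_le_Psi ⟨?_, bot_le⟩))
  simp [betLower]

end Psi

section optimalBet

variable {p μ : ℝ}

noncomputable def optimalBet (p μ : ℝ) : ℝ := (p - μ) / (μ * (1 - μ))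

lemma coe_optimalBet_mem_betSet (hp : p ∈ Icc (0 : ℝ) 1) (hμ : μ ∈ Ioo (0 : ℝ) 1) :
    (optimalBet p μ : EReal) ∈ betSet μ := by
  have hμ₀ : μ ≠ 0 := hμ.1.ne'
  have hμ₁ : 1 - μ ≠ 0 := (sub_pos.2 hμ.2).ne'
  have hden : 0 < μ * (1 - μ) := mul_pos hμ.1 (sub_pos.2 hμ.2)
  constructor
  · rw [betLower, if_neg (sub_ne_zero.1 hμ₁).symm, EReal.coe_le_coe_iff, optimalBet,
      show -(1 - μ)⁻¹ = -μ / (μ * (1 - μ)) by field_simp]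
    gcongr
    linarith [hp.1]
  · rw [betUpper, if_neg hμ₀, EReal.coe_le_coe_iff, optimalBet,
      show μ⁻¹ = (1 - μ) / (μ * (1 - μ)) by field_simp]
    gcongr
    linarith [hp.2]

lemma one_add_optimalBet_mul (hμ : μ ∈ Ioo (0 : ℝ) 1) (w : ℝ) :
    1 + optimalBet p μ * (w - μ) = w * (p / μ) + (1 - w) * ((1 - p) / (1 - μ)) := by
  have hμ₀ : μ ≠ 0 := hμ.1.ne'
  have hμ₁ : 1 - μ ≠ 0 := (sub_pos.2 hμ.2).ne'
  rw [optimalBet]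
  field_simp
  ring

lemma log_one_add_optimalBet_mul {w : ℝ} (hp : p ∈ Icc (0 : ℝ) 1) (hμ : μ ∈ Ioo (0 : ℝ) 1)
    (hw : w ∈ Icc (0 : ℝ) 1) (h₀ : p = 0 → w = 0) (h₁ : p = 1 → w = 1) :
    0 < 1 + optimalBet p μ * (w - μ) ∧
      w * Real.log (p / μ) + (1 - w) * Real.log ((1 - p) / (1 - μ)) ≤
        Real.log (1 + optimalBet p μ * (w - μ)) := by
  have hμ₁ : 0 < 1 - μ := sub_pos.2 hμ.2
  rw [one_add_optimalBet_mul hμ]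
  rcases hp.1.eq_or_lt with rfl | hp₀
  · obtain rfl := h₀ rfl
    simpa using hμ₁
  rcases hp.2.eq_or_lt with rfl | hp₁
  · obtain rfl := h₁ rfl
    simpa using hμ.1
  have hA : 0 < p / μ := div_pos hp₀ hμ.1
  have hB : 0 < (1 - p) / (1 - μ) := div_pos (sub_pos.2 hp₁) hμ₁
  refine ⟨?_, mul_log_add_mul_log_le_log hw hA hB⟩
  rcases hw.1.eq_or_lt with rfl | hw₀
  · simpa using hB
  · exact add_pos_of_pos_of_nonneg (mul_pos hw₀ hA) (mul_nonneg (sub_nonneg.2 hw.2) hB.le)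

end optimalBet

lemma bkl_eq_of_mem_Ioo {p μ : ℝ} (hμ : μ ∈ Ioo (0 : ℝ) 1) :
    bkl p μ = ((p * Real.log (p / μ) + (1 - p) * Real.log ((1 - p) / (1 - μ)) : ℝ) : EReal) := by
  have hμ₀ : μ ≠ 0 := hμ.1.ne'
  have hμ₁ : μ ≠ 1 := hμ.2.ne
  unfold bkl
  split_ifs <;> simp_all

section klBound

variable {T : ℕ} {z : Fin T → ℝ} {μ : ℝ}

lemma bkl_muz_le_Psi_of_mem_Ioo (hT : 1 ≤ T) (hz : ∀ t, z t ∈ Icc (0 : ℝ) 1)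
    (hμ : μ ∈ Ioo (0 : ℝ) 1) : bkl (muz z) μ ≤ Psi z μ := by
  set p := muz z
  set a := optimalBet p μ
  have hp : p ∈ Icc (0 : ℝ) 1 := muz_mem_Icc z hz
  have hbet (t : Fin T) := log_one_add_optimalBet_mul hp hμ (hz t)
    (fun h ↦ eq_zero_of_muz_eq_zero (fun t ↦ (hz t).1) h t)
    (fun h ↦ eq_one_of_muz_eq_one (fun t ↦ (hz t).2) h t)
  have hsum : ∑ t, (z t * Real.log (p / μ) + (1 - z t) * Real.log ((1 - p) / (1 - μ))) =
      T * (p * Real.log (p / μ) + (1 - p) * Real.log ((1 - p) / (1 - μ))) := by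
    simp only [Finset.sum_add_distrib, ← Finset.sum_mul, Finset.sum_sub_distrib,
      sum_eq_mul_muz z, Finset.sum_const, Finset.card_univ, Fintype.card_fin, nsmul_eq_mul]
    ring
  have hT₀ : (T : ℝ) ≠ 0 := Nat.cast_ne_zero.2 (by omega)
  calc bkl p μ = ((p * Real.log (p / μ) + (1 - p) * Real.log ((1 - p) / (1 - μ)) : ℝ) : EReal) :=
        bkl_eq_of_mem_Ioo hμ
    _ = (((T : ℝ)⁻¹ * ∑ t, (z t * Real.log (p / μ) + (1 - z t) * Real.log ((1 - p) / (1 - μ)))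
          : ℝ) : EReal) := by rw [hsum, inv_mul_cancel_left₀ hT₀]
    _ ≤ (((T : ℝ)⁻¹ * ∑ t, Real.log (1 + a * (z t - μ)) : ℝ) : EReal) := by
        gcongr with t
        exact (hbet t).2
    _ = betTerm z μ a := (betTerm_coe_eq fun t ↦ (hbet t).1).symm
    _ ≤ Psi z μ := betTerm_le_Psi (coe_optimalBet_mem_betSet hp hμ)

lemma bkl_muz_le_Psi (hT : 1 ≤ T) (hz : ∀ t, z t ∈ Icc (0 : ℝ) 1) (hμ : μ ∈ Icc (0 : ℝ) 1) :
    bkl (muz z) μ ≤ Psi z μ := by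
  rcases hμ.1.eq_or_lt with rfl | hμ₀
  · by_cases hp : muz z = 0
    · simpa [hp, bkl] using Psi_nonneg hμ
    · have hz₀ : ∃ t, z t ≠ 0 := by
        by_contra! h
        exact hp (by simp [muz, h])
      simp [Psi_zero_eq_top (fun t ↦ (hz t).1) hz₀]
  rcases hμ.2.eq_or_lt with rfl | hμ₁
  · by_cases hp : muz z = 1
    · simpa [hp, bkl] using Psi_nonneg hμ
    · have hz₁ : ∃ t, z t ≠ 1 := by
        by_contra! h
        exact hp (by simp [muz, h, Nat.one_le_iff_ne_zero.1 hT])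
      simp [Psi_one_eq_top (fun t ↦ (hz t).2) hz₁]
  exact bkl_muz_le_Psi_of_mem_Ioo hT hz ⟨hμ₀, hμ₁⟩

end klBound

/-- Relaxation of the betting inverses by the kl inverses:
`Ψ_+^{-1}(z, C/T) ≤ kl_+^{-1}(μ_z, C/T)` and `Ψ_-^{-1}(z, C/T) ≥ kl_-^{-1}(μ_z, C/T)`. -/
theorem psiInv_le_klInv {T : ℕ} (hT : 1 ≤ T) (z : Fin T → ℝ)
    (hz : ∀ t, z t ∈ Set.Icc (0 : ℝ) 1) (C : ℝ) (hC : 0 ≤ C) :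
    PsiInvPlus z (((C / T : ℝ)) : EReal) ≤ klInvPlus (muz z) (((C / T : ℝ)) : EReal) ∧
    klInvMinus (muz z) (((C / T : ℝ)) : EReal) ≤ PsiInvMinus z (((C / T : ℝ)) : EReal) := by
  set c : EReal := ((C / T : ℝ) : EReal)
  have hsub : {μ | μ ∈ Icc (0 : ℝ) 1 ∧ Psi z μ ≤ c} ⊆ {μ | μ ∈ Icc (0 : ℝ) 1 ∧ bkl (muz z) μ ≤ c} :=
    fun μ hμ ↦ ⟨hμ.1, (bkl_muz_le_Psi hT hz hμ.1).trans hμ.2⟩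
  have hmuz : muz z ∈ {μ | μ ∈ Icc (0 : ℝ) 1 ∧ Psi z μ ≤ c} :=
    ⟨muz_mem_Icc z hz, (Psi_muz_nonpos hz).trans (EReal.coe_nonneg.2 (by positivity))⟩
  exact ⟨csSup_le_csSup ⟨1, fun μ hμ ↦ hμ.1.2⟩ ⟨_, hmuz⟩ hsub,
    csInf_le_csInf ⟨0, fun μ hμ ↦ hμ.1.1⟩ ⟨_, hmuz⟩ hsub⟩
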